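/- Assume each agent is eligible for at most one preferential category and all categories' priorities are consistent with the baseline ordering. Then the outcome of the minimum-guarantees rule is the UNIQUE matching that complies with the eligibility requirements, is a maximum beneficiary assignment, respects priorities, is non-wasteful, and is order preserving for q_{c_u^1} = 0 and q_{c_u^2} = q_{c_u}. -/

import Mathlib

open scoped Classical

/-- An instance of the rationing problem: a quota for every category and, for every
category `c`, a priority ranking `≿_c`: a total preorder on `N ∪ {∅}`, where we model
`N ∪ {∅}` as `Option N` with `none` playing the role of `∅`. -/
structure Inst (N C : Type*) where
  quota : C → ℕ
  prio : C → Option N → Option N → Prop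
  total : ∀ c x y, prio c x y ∨ prio c y x
  trans : ∀ c x y z, prio c x y → prio c y z → prio c x z

namespace Inst

variable {N C : Type*}

/-- The strict part `≻_c` of the priority ranking `≿_c`. -/
def Strict (I : Inst N C) (c : C) (x y : Option N) : Prop :=
  I.prio c x y ∧ ¬ I.prio c y x

/-- Agent `i` is eligible for category `c` if `i ≻_c ∅`. -/
def Eligible (I : Inst N C) (i : N) (c : C) : Prop :=
  I.Strict c (some i) none

end Inst

variable {N C : Type*} [Fintype N] [DecidableEq N] [DecidableEq C]

/-- The number of matched agents of (the function) `μ`. -/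
def msize (μ : N → Option C) : ℕ :=
  (Finset.univ.filter fun i => μ i ≠ none).card

/-- `μ` satisfies the capacity constraints: every category `c` is matched
to at most `quota c` agents. -/
def Inst.IsMatching (I : Inst N C) (μ : N → Option C) : Prop :=
  ∀ c, (Finset.univ.filter fun i => μ i = some c).card ≤ I.quota c

/-- A baseline ordering `≻_π`, given as a duplicate-free list of all agents,
listed from highest priority to lowest priority; so `i ≻_π j` iff
`order.indexOf i < order.indexOf j`. -/
def IsBaseline (order : List N) : Prop :=
  order.Nodup ∧ ∀ i : N, i ∈ order

/-- `μ` complies with the eligibility requirements. -/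
def Complies (I : Inst N C) (μ : N → Option C) : Prop :=
  ∀ (i : N) (c : C), μ i = some c → I.Eligible i c

/-- `μ` respects priorities: no unmatched agent has strictly higher priority for some
category than an agent matched to it. -/
def RespectsPriorities (I : Inst N C) (μ : N → Option C) : Prop :=
  ¬ ∃ (i j : N) (c : C), μ i = some c ∧ μ j = none ∧ I.Strict c (some j) (some i)

/-- The number of agents matched to category `c` by `μ`. -/
def catCount (μ : N → Option C) (c : C) : ℕ :=
  (Finset.univ.filter fun i => μ i = some c).card

/-- `μ` is non-wasteful: an eligible agent is only left unmatched if all units of the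
category are used. -/
def NonWasteful (I : Inst N C) (μ : N → Option C) : Prop :=
  ∀ (i : N) (c : C), I.Eligible i c → μ i = none → catCount μ c = I.quota c

/-- The number of agents matched to a preferential category (a category other than the
unreserved category `cu`). -/
def beneCount (cu : C) (μ : N → Option C) : ℕ :=
  (Finset.univ.filter fun i => μ i ≠ none ∧ μ i ≠ some cu).card

/-- `μ` is a maximum beneficiary assignment: it maximizes the number of agents matched to
preferential categories among all matchings complying with the eligibility requirements. -/
def MaxBene (I : Inst N C) (cu : C) (μ : N → Option C) : Prop :=
  ∀ ν : N → Option C, I.IsMatching ν → Complies I ν → beneCount cu ν ≤ beneCount cu μ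

/-- The priorities are consistent with the baseline ordering: for each category the
eligible agents are ranked according to `≻_π`. -/
def Consistent (I : Inst N C) (order : List N) : Prop :=
  ∀ (c : C) (i j : N), I.Eligible i c → I.Eligible j c →
    (I.Strict c (some i) (some j) ↔ order.idxOf i < order.idxOf j)

/-- Each agent is eligible for at most one preferential category. -/
def OneCategory (I : Inst N C) (cu : C) : Prop :=
  ∀ (i : N) (c c' : C), c ≠ cu → c' ≠ cu → I.Eligible i c → I.Eligible i c' → c = c'

/-- One step of the minimum-guarantees rule: the considered agent is matched to a
preferential category she is eligible for if a unit of it remains, and otherwise to the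
unreserved category if an unreserved unit remains. -/
noncomputable def mgStep (I : Inst N C) (cu : C) (μ : N → Option C) (i : N) : N → Option C :=
  if h : ∃ c, c ≠ cu ∧ I.Eligible i c ∧ catCount μ c < I.quota c then
    Function.update μ i (some h.choose)
  else if catCount μ cu < I.quota cu then Function.update μ i (some cu)
  else μ

/-- The outcome of the minimum-guarantees rule: the agents are considered in order of the
baseline ordering from highest to lowest priority. -/
noncomputable def mgOutcome (I : Inst N C) (cu : C) (order : List N) : N → Option C :=
  order.foldl (mgStep I cu) fun _ => none

/-- Order preservation for `q_{c_u^1} = 0` and `q_{c_u^2} = q_{c_u}` (the unreserved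
category `cu` plays the role of `c_u^2`, and no agent is matched to `c_u^1`, so clause (i)
is vacuous): if `μ(j) ∈ C_p`, `i ≻_{μ(j)} j`, and `i` is eligible for `μ(j)`, then
`μ(i) ≠ c_u^2 = cu`. -/
def OrderPreservingMG (I : Inst N C) (cu : C) (μ : N → Option C) : Prop :=
  ∀ (i j : N) (ci cj : C), μ i = some ci → μ j = some cj → cj ≠ cu →
    I.Strict cj (some i) (some j) → I.Eligible i cj → ci ≠ cu

/-- One step of the first phase of the over-and-above rule: the considered agent `i` is
matched to the unreserved category only if an unreserved unit remains and, for any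
preferential category `c` that `i` is eligible for, at least `q_c` agents of `N_c` other
than `i` are still unmatched. -/
noncomputable def oaStep (I : Inst N C) (cu : C) (σ : N → Option C) (i : N) : N → Option C :=
  if catCount σ cu < I.quota cu ∧
      ∀ c : C, c ≠ cu → I.Eligible i c →
        I.quota c ≤ (Finset.univ.filter fun j => j ≠ i ∧ I.Eligible j c ∧ σ j = none).card then
    Function.update σ i (some cu)
  else σ

/-- The first phase of the over-and-above rule (allocation of the unreserved units),
considering the agents in order of the baseline ordering from highest to lowest priority. -/
noncomputable def oaPhase1 (I : Inst N C) (cu : C) (order : List N) : N → Option C :=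
  order.foldl (oaStep I cu) fun _ => none

/-- The outcome of the over-and-above rule: after the first phase, each preferential
category `c` is filled with the `min {q_c, |N_c|}` highest (baseline) priority agents of
`N_c` who are still unmatched. -/
noncomputable def oaOutcome (I : Inst N C) (cu : C) (order : List N) : N → Option C :=
  fun i =>
    if oaPhase1 I cu order i = some cu then some cu
    else if h : ∃ c, c ≠ cu ∧ I.Eligible i c ∧
        (Finset.univ.filter fun j => I.Eligible j c ∧ oaPhase1 I cu order j = none ∧
          order.idxOf j < order.idxOf i).card < I.quota c then
      some h.choose
    else none

/-- Order preservation for `q_{c_u^1} = q_{c_u}` and `q_{c_u^2} = 0` (the unreserved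
category `cu` plays the role of `c_u^1`, and no agent is matched to `c_u^2`, so clause (ii)
is vacuous): if `μ(i) ∈ C_p`, `i ≻_{μ(j)} j`, and `j` is eligible for `μ(i)`, then
`μ(j) ≠ c_u^1 = cu`. -/
def OrderPreservingOA (I : Inst N C) (cu : C) (μ : N → Option C) : Prop :=
  ∀ (i j : N) (ci cj : C), μ i = some ci → μ j = some cj → ci ≠ cu →
    I.Strict cj (some i) (some j) → I.Eligible j ci → cj ≠ cu

/-!
The minimum-guarantees rule considers the agents in baseline order, and the assignment of each
agent is decided by the category counts at the moment she is considered; these counts only grow.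
Hence the outcome complies with eligibility, respects priorities, is non-wasteful and order
preserving, and it fills every preferential category `c` up to `min q_c |N_c|`, the most any
matching complying with eligibility can. So it is a maximum beneficiary assignment, and every
maximum beneficiary assignment fills each preferential category to exactly that level.

Conversely, in a matching with all these properties, priorities together with order preservation
(each agent having a single preferential category) make the agents matched to a preferential
category `c` an initial segment of `N_c` in baseline order, and those matched to `c_u` an initial
segment of the agents not matched preferentially. The sizes of these segments are fixed by the
counts above and by non-wastefulness, and an initial segment is determined by its size.
-/

open Finset

section InitialSegment

variable {α β : Type*} [LinearOrder β]

def IsInitialSegment (f : α → β) (A S : Finset α) : Prop :=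
  S ⊆ A ∧ ∀ j ∈ S, ∀ i ∈ A, f i < f j → i ∈ S

theorem IsInitialSegment.subset_or_subset {f : α → β} (hf : Function.Injective f)
    {A S T : Finset α} (hS : IsInitialSegment f A S) (hT : IsInitialSegment f A T) :
    S ⊆ T ∨ T ⊆ S := by
  by_contra! h
  obtain ⟨s, hsS, hsT⟩ := not_subset.1 h.1
  obtain ⟨t, htT, htS⟩ := not_subset.1 h.2
  rcases lt_trichotomy (f s) (f t) with hst | hst | hst
  · exact hsT (hT.2 t htT s (hS.1 hsS) hst)
  · exact hsT (hf hst ▸ htT)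
  · exact htS (hS.2 s hsS t (hT.1 htT) hst)

theorem IsInitialSegment.eq_of_card_eq {f : α → β} (hf : Function.Injective f)
    {A S T : Finset α} (hS : IsInitialSegment f A S) (hT : IsInitialSegment f A T)
    (hcard : S.card = T.card) : S = T := by
  rcases hS.subset_or_subset hf hT with h | h
  · exact eq_of_subset_of_card_le h hcard.ge
  · exact (eq_of_subset_of_card_le h hcard.le).symm

end InitialSegment

theorem card_eq_min_of_subset {α : Type*} {S A : Finset α} {q : ℕ} (hSA : S ⊆ A)
    (hq : S.card ≤ q) (hfull : S.card < q → A ⊆ S) : S.card = min q A.card := by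
  have := card_le_card hSA
  rcases hq.lt_or_eq with hlt | rfl
  · have := card_le_card (hfull hlt)
    omega
  · omega

omit [Fintype N] [DecidableEq C] in
theorem IsBaseline.idxOf_injective {order : List N} (hb : IsBaseline order) :
    Function.Injective (order.idxOf ·) :=
  fun _ _ h => (List.idxOf_inj (hb.2 _)).1 h

omit [Fintype N] [DecidableEq N] [DecidableEq C] in
theorem Inst.Eligible.of_strict {I : Inst N C} {c : C} {i j : N} (hi : I.Eligible i c)
    (h : I.Strict c (some j) (some i)) : I.Eligible j c :=
  ⟨I.trans c _ _ _ h.1 hi.1, fun hc => hi.2 (I.trans c _ _ _ hc h.1)⟩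

section Fibers

omit [DecidableEq N]
variable {I : Inst N C} {cu : C} {μ ν : N → Option C}

def fiber (μ : N → Option C) (c : C) : Finset N :=
  univ.filter fun i => μ i = some c

@[simp]
theorem mem_fiber {i : N} {c : C} : i ∈ fiber μ c ↔ μ i = some c := by
  simp [fiber]

theorem card_fiber (c : C) : (fiber μ c).card = catCount μ c := rfl

theorem eq_of_fiber_eq (h : ∀ c, fiber μ c = fiber ν c) : μ = ν :=
  funext fun i => Option.ext fun c => by rw [← mem_fiber, h, mem_fiber]

noncomputable def Inst.eligibleAgents (I : Inst N C) (c : C) : Finset N :=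
  univ.filter fun i => I.Eligible i c

theorem fiber_subset_eligibleAgents (hc : Complies I μ) (c : C) :
    fiber μ c ⊆ I.eligibleAgents c := fun i hi => by
  simpa [Inst.eligibleAgents] using hc i c (mem_fiber.1 hi)

theorem catCount_le_min (hm : I.IsMatching μ) (hc : Complies I μ) (c : C) :
    catCount μ c ≤ min (I.quota c) (I.eligibleAgents c).card :=
  le_min (hm c) (card_le_card (fiber_subset_eligibleAgents hc c))

noncomputable def nonBeneficiaries (cu : C) (μ : N → Option C) : Finset N :=
  univ.filter fun i => ∀ c, c ≠ cu → μ i ≠ some c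

theorem fiber_subset_nonBeneficiaries : fiber μ cu ⊆ nonBeneficiaries cu μ := fun i hi => by
  simp only [nonBeneficiaries, mem_filter, mem_univ, true_and, mem_fiber.1 hi, ne_eq,
    Option.some_inj]
  exact fun c hc h => hc h.symm

theorem catCount_unreserved_eq_min (hcuE : ∀ i : N, I.Eligible i cu) (hm : I.IsMatching μ)
    (hnw : NonWasteful I μ) :
    catCount μ cu = min (I.quota cu) (nonBeneficiaries cu μ).card := by
  refine card_eq_min_of_subset fiber_subset_nonBeneficiaries (hm cu)
    fun hlt i hi => mem_fiber.2 ?_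
  simp only [nonBeneficiaries, mem_filter, mem_univ, true_and] at hi
  cases hμi : μ i with
  | none => exact absurd (hnw i cu (hcuE i) hμi) hlt.ne
  | some c => exact congrArg some (not_not.1 fun hc => hi c hc hμi)

def prefCategories (cu : C) (μ : N → Option C) : Finset C :=
  ((univ.image μ).eraseNone).erase cu

theorem mem_prefCategories {c : C} : c ∈ prefCategories cu μ ↔ c ≠ cu ∧ ∃ i, μ i = some c := by
  simp [prefCategories]

theorem beneCount_eq_sum_catCount {T : Finset C} (hcu : cu ∉ T)
    (hT : ∀ i c, μ i = some c → c ≠ cu → c ∈ T) :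
    beneCount cu μ = ∑ c ∈ T, catCount μ c := by
  have hunion : univ.filter (fun i => μ i ≠ none ∧ μ i ≠ some cu) = T.biUnion (fiber μ) := by
    ext i
    simp only [mem_filter, mem_univ, true_and, mem_biUnion, mem_fiber]
    constructor
    · rintro ⟨hn, hncu⟩
      obtain ⟨c, hc⟩ := Option.ne_none_iff_exists'.1 hn
      exact ⟨c, hT i c hc (by rintro rfl; exact hncu hc), hc⟩
    · rintro ⟨c, hcT, hc⟩
      rw [hc]
      exact ⟨Option.some_ne_none c, fun h => hcu (Option.some_inj.1 h ▸ hcT)⟩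
  rw [beneCount, hunion, card_biUnion]
  · rfl
  · intro c _ c' _ hne
    exact disjoint_left.2 fun i h h' =>
      hne (Option.some_inj.1 ((mem_fiber.1 h).symm.trans (mem_fiber.1 h')))

theorem beneCount_eq_sum_prefCategories (h : ∀ c, c ≠ cu → catCount ν c ≤ catCount μ c) :
    beneCount cu ν = ∑ c ∈ prefCategories cu μ, catCount ν c := by
  refine beneCount_eq_sum_catCount (fun h' => (mem_prefCategories.1 h').1 rfl)
    fun i c hi hc => ?_
  obtain ⟨j, hj⟩ : (fiber μ c).Nonempty :=
    card_pos.1 ((card_pos.2 ⟨i, mem_fiber.2 hi⟩).trans_le (h c hc))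
  exact mem_prefCategories.2 ⟨hc, j, mem_fiber.1 hj⟩

theorem beneCount_le_of_catCount_le (h : ∀ c, c ≠ cu → catCount ν c ≤ catCount μ c) :
    beneCount cu ν ≤ beneCount cu μ := by
  rw [beneCount_eq_sum_prefCategories h, beneCount_eq_sum_prefCategories fun _ _ => le_rfl]
  exact sum_le_sum fun c hc => h c (ne_of_mem_erase hc)

theorem catCount_eq_of_beneCount_le (h : ∀ c, c ≠ cu → catCount ν c ≤ catCount μ c)
    (hle : beneCount cu μ ≤ beneCount cu ν) (c : C) (hc : c ≠ cu) :
    catCount ν c = catCount μ c := by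
  by_cases hcT : c ∈ prefCategories cu μ
  · have hsum := le_antisymm (beneCount_le_of_catCount_le h) hle
    rw [beneCount_eq_sum_prefCategories h, beneCount_eq_sum_prefCategories fun _ _ => le_rfl]
      at hsum
    exact (sum_eq_sum_iff_of_le fun c hc => h c (ne_of_mem_erase hc)).1 hsum c hcT
  · have hempty : fiber μ c = ∅ := eq_empty_of_forall_notMem fun j hj =>
      hcT (mem_prefCategories.2 ⟨hc, j, mem_fiber.1 hj⟩)
    have := h c hc
    rw [← card_fiber (μ := μ) c, hempty, card_empty] at this ⊢
    omega

end Fibers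

section MinimumGuarantees

variable {I : Inst N C} {cu : C} {μ ν : N → Option C}

theorem catCount_eq_add_of_eq_of_ne {i : N} (hμ : μ i = none) (h : ∀ j, j ≠ i → ν j = μ j)
    (c : C) : catCount ν c = catCount μ c + if ν i = some c then 1 else 0 := by
  simp only [catCount, card_filter]
  rw [← add_sum_erase _ _ (mem_univ i), ← add_sum_erase _ _ (mem_univ i), hμ, add_comm]
  simp only [reduceCtorEq, if_false, zero_add]
  exact congrArg₂ _ (sum_congr rfl fun j hj => by rw [h j (ne_of_mem_erase hj)]) rfl

theorem mgStep_apply_of_ne (μ : N → Option C) {i j : N} (h : j ≠ i) :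
    mgStep I cu μ i j = μ j := by
  unfold mgStep
  split_ifs <;> simp [Function.update_of_ne h]

theorem catCount_mgStep {i : N} (hμ : μ i = none) (c : C) :
    catCount (mgStep I cu μ i) c = catCount μ c + if mgStep I cu μ i i = some c then 1 else 0 :=
  catCount_eq_add_of_eq_of_ne hμ (fun _ hj => mgStep_apply_of_ne μ hj) c

theorem mgStep_self_eq_some_of_eligible (hone : OneCategory I cu) {i : N} {c : C} (hc : c ≠ cu)
    (he : I.Eligible i c) (hlt : catCount μ c < I.quota c) : mgStep I cu μ i i = some c := by
  have h : ∃ c, c ≠ cu ∧ I.Eligible i c ∧ catCount μ c < I.quota c := ⟨c, hc, he, hlt⟩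
  obtain ⟨hc', he', -⟩ := h.choose_spec
  rw [mgStep, dif_pos h, Function.update_self, hone i _ c hc' hc he' he]

theorem catCount_lt_quota_of_mgStep_self_eq_some {i : N} {c : C} (hμ : μ i = none)
    (h : mgStep I cu μ i i = some c) :
    catCount μ c < I.quota c ∧ (c ≠ cu → I.Eligible i c) := by
  unfold mgStep at h
  split_ifs at h with hp hq
  · rw [Function.update_self, Option.some_inj] at h
    subst h
    exact ⟨hp.choose_spec.2.2, fun _ => hp.choose_spec.2.1⟩
  · rw [Function.update_self, Option.some_inj] at h
    subst h
    exact ⟨hq, fun h => (h rfl).elim⟩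
  · simp [hμ] at h

theorem quota_le_catCount_of_mgStep_self_eq_none {i : N} {c : C}
    (h : mgStep I cu μ i i = none) (hc : c ≠ cu → I.Eligible i c) :
    I.quota c ≤ catCount μ c := by
  unfold mgStep at h
  split_ifs at h with hp hq
  · simp at h
  · simp at h
  · by_cases hcu : c = cu
    · exact hcu ▸ not_lt.1 hq
    · exact not_lt.1 fun hlt => hp ⟨c, hcu, hc hcu, hlt⟩

theorem isMatching_mgStep {i : N} (hμ : μ i = none) (hm : I.IsMatching μ) :
    I.IsMatching (mgStep I cu μ i) := fun c => by
  change catCount _ c ≤ _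
  rw [catCount_mgStep hμ]
  split_ifs with h
  · exact (catCount_lt_quota_of_mgStep_self_eq_some hμ h).1
  · exact hm c

theorem foldl_mgStep_apply_of_notMem {l : List N} {j : N} (h : j ∉ l) (μ : N → Option C) :
    l.foldl (mgStep I cu) μ j = μ j := by
  induction l generalizing μ with
  | nil => rfl
  | cons a l ih =>
    rw [List.foldl_cons, ih (fun h' => h (.tail _ h')),
      mgStep_apply_of_ne μ (List.ne_of_not_mem_cons h)]

theorem catCount_le_foldl_mgStep {l : List N} (hl : l.Nodup) (hμ : ∀ i ∈ l, μ i = none)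
    (c : C) : catCount μ c ≤ catCount (l.foldl (mgStep I cu) μ) c := by
  induction l generalizing μ with
  | nil => exact le_rfl
  | cons a l ih =>
    obtain ⟨ha, hl⟩ := List.nodup_cons.1 hl
    calc catCount μ c ≤ catCount (mgStep I cu μ a) c := by
          rw [catCount_mgStep (hμ a (.head _))]; omega
      _ ≤ _ := ih hl fun i hi => by
          rw [mgStep_apply_of_ne μ (ne_of_mem_of_not_mem hi ha)]; exact hμ i (.tail _ hi)

theorem isMatching_foldl_mgStep {l : List N} (hl : l.Nodup) (hμ : ∀ i ∈ l, μ i = none)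
    (hm : I.IsMatching μ) : I.IsMatching (l.foldl (mgStep I cu) μ) := by
  induction l generalizing μ with
  | nil => exact hm
  | cons a l ih =>
    obtain ⟨ha, hl⟩ := List.nodup_cons.1 hl
    refine ih hl (fun i hi => ?_) (isMatching_mgStep (hμ a (.head _)) hm)
    rw [mgStep_apply_of_ne μ (ne_of_mem_of_not_mem hi ha)]
    exact hμ i (.tail _ hi)

noncomputable def mgState (I : Inst N C) (cu : C) (order : List N) (k : ℕ) : N → Option C :=
  (order.take k).foldl (mgStep I cu) fun _ => none

variable {order : List N}

theorem mgState_length : mgState I cu order order.length = mgOutcome I cu order := by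
  rw [mgState, List.take_length, mgOutcome]

theorem mgState_idxOf_apply_self {i : N} (hi : i ∈ order) :
    mgState I cu order (order.idxOf i) i = none :=
  foldl_mgStep_apply_of_notMem (fun h => lt_irrefl _ ((List.mem_take_iff_idxOf_lt hi).1 h)) _

theorem catCount_mgState_le (hnd : order.Nodup) {k m : ℕ} (hkm : k ≤ m) (c : C) :
    catCount (mgState I cu order k) c ≤ catCount (mgState I cu order m) c := by
  have hsplit : order.take m = order.take k ++ (order.take m).drop k := by
    conv_lhs => rw [← List.take_append_drop k (order.take m)]
    rw [List.take_take, min_eq_left hkm]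
  have hnd' := List.nodup_append.1 (hsplit ▸ hnd.sublist (List.take_sublist m order))
  rw [mgState, mgState, hsplit, List.foldl_append]
  exact catCount_le_foldl_mgStep hnd'.2.1
    (fun i hi => foldl_mgStep_apply_of_notMem (fun h => hnd'.2.2 i h i hi rfl) _) c

theorem isMatching_mgOutcome (hnd : order.Nodup) : I.IsMatching (mgOutcome I cu order) :=
  isMatching_foldl_mgStep hnd (fun _ _ => rfl) fun c => by simp

theorem mgOutcome_apply (hnd : order.Nodup) {i : N} (hi : i ∈ order) :
    mgOutcome I cu order i = mgStep I cu (mgState I cu order (order.idxOf i)) i i := by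
  have hsplit : order = order.take (order.idxOf i) ++ i :: order.drop (order.idxOf i + 1) := by
    conv_lhs => rw [← List.take_append_drop (order.idxOf i) order]
    rw [List.drop_eq_getElem_cons (List.idxOf_lt_length_iff.2 hi), List.getElem_idxOf]
  have hnotin : i ∉ order.drop (order.idxOf i + 1) :=
    (List.nodup_cons.1 (List.nodup_append.1 (hsplit ▸ hnd)).2.1).1
  conv_lhs => rw [mgOutcome, hsplit, List.foldl_append, List.foldl_cons,
    foldl_mgStep_apply_of_notMem hnotin]
  rfl

section Outcome

variable (hb : IsBaseline order)
include hb

theorem mgOutcome_eq_some {i : N} {c : C} (h : mgOutcome I cu order i = some c) :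
    catCount (mgState I cu order (order.idxOf i)) c < I.quota c ∧ (c ≠ cu → I.Eligible i c) :=
  catCount_lt_quota_of_mgStep_self_eq_some (mgState_idxOf_apply_self (hb.2 i))
    ((mgOutcome_apply hb.1 (hb.2 i)).symm.trans h)

theorem quota_le_of_mgOutcome_eq_none {i : N} {c : C} (h : mgOutcome I cu order i = none)
    (hc : c ≠ cu → I.Eligible i c) :
    I.quota c ≤ catCount (mgState I cu order (order.idxOf i)) c :=
  quota_le_catCount_of_mgStep_self_eq_none ((mgOutcome_apply hb.1 (hb.2 i)).symm.trans h) hc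

theorem mgOutcome_eq_some_of_eligible (hone : OneCategory I cu) {i : N} {c : C} (hc : c ≠ cu)
    (he : I.Eligible i c) (hlt : catCount (mgState I cu order (order.idxOf i)) c < I.quota c) :
    mgOutcome I cu order i = some c :=
  (mgOutcome_apply hb.1 (hb.2 i)).trans (mgStep_self_eq_some_of_eligible hone hc he hlt)

theorem catCount_mgState_le_mgOutcome (i : N) (c : C) :
    catCount (mgState I cu order (order.idxOf i)) c ≤ catCount (mgOutcome I cu order) c :=
  mgState_length (I := I) (cu := cu) ▸ catCount_mgState_le hb.1 List.idxOf_le_length c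

theorem complies_mgOutcome (hcuE : ∀ i : N, I.Eligible i cu) :
    Complies I (mgOutcome I cu order) := fun i c h => by
  by_cases hc : c = cu
  · exact hc ▸ hcuE i
  · exact (mgOutcome_eq_some hb h).2 hc

theorem nonWasteful_mgOutcome : NonWasteful I (mgOutcome I cu order) := fun i c he h =>
  le_antisymm (isMatching_mgOutcome hb.1 c)
    ((quota_le_of_mgOutcome_eq_none hb h fun _ => he).trans
      (catCount_mgState_le_mgOutcome hb i c))

theorem respectsPriorities_mgOutcome (hcuE : ∀ i : N, I.Eligible i cu)
    (hcons : Consistent I order) :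
    RespectsPriorities I (mgOutcome I cu order) := by
  rintro ⟨i, j, c, hi, hj, hs⟩
  have hiE := complies_mgOutcome hb hcuE i c hi
  have hjE := hiE.of_strict hs
  have hji := (hcons c j i hjE hiE).1 hs
  have := quota_le_of_mgOutcome_eq_none hb hj fun _ => hjE
  have := catCount_mgState_le (I := I) (cu := cu) hb.1 hji.le c
  have := (mgOutcome_eq_some hb hi).1
  omega

theorem orderPreservingMG_mgOutcome (hcons : Consistent I order) (hone : OneCategory I cu) :
    OrderPreservingMG I cu (mgOutcome I cu order) := by
  intro i j ci cj hi hj hcj hs hiE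
  have hjE := (mgOutcome_eq_some hb hj).2 hcj
  have hij := (hcons cj i j hiE hjE).1 hs
  have hfree := (catCount_mgState_le (I := I) (cu := cu) hb.1 hij.le cj).trans_lt
    (mgOutcome_eq_some hb hj).1
  rw [mgOutcome_eq_some_of_eligible hb hone hcj hiE hfree, Option.some_inj] at hi
  exact hi ▸ hcj

theorem catCount_mgOutcome (hone : OneCategory I cu) {c : C} (hc : c ≠ cu) :
    catCount (mgOutcome I cu order) c = min (I.quota c) (I.eligibleAgents c).card := by
  refine card_eq_min_of_subset (fun i hi => ?_) (isMatching_mgOutcome hb.1 c) fun hlt i hi => ?_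
  · simpa [Inst.eligibleAgents] using (mgOutcome_eq_some hb (mem_fiber.1 hi)).2 hc
  · have hiE : I.Eligible i c := by simpa [Inst.eligibleAgents] using hi
    exact mem_fiber.2 (mgOutcome_eq_some_of_eligible hb hone hc hiE
      ((catCount_mgState_le_mgOutcome hb i c).trans_lt hlt))

end Outcome

end MinimumGuarantees

section Uniqueness

variable {I : Inst N C} {cu : C} {order : List N} {μ ν : N → Option C}

theorem isInitialSegment_fiber (hcons : Consistent I order) (hone : OneCategory I cu)
    (hc : Complies I μ) (hrp : RespectsPriorities I μ) (hop : OrderPreservingMG I cu μ)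
    {c : C} (hcu : c ≠ cu) :
    IsInitialSegment (order.idxOf ·) (I.eligibleAgents c) (fiber μ c) := by
  refine ⟨fiber_subset_eligibleAgents hc c, fun j hj i hi hlt => mem_fiber.2 ?_⟩
  rw [mem_fiber] at hj
  replace hi : I.Eligible i c := by simpa [Inst.eligibleAgents] using hi
  have hs : I.Strict c (some i) (some j) := (hcons c i j hi (hc j c hj)).2 hlt
  cases hμi : μ i with
  | none => exact absurd ⟨j, i, c, hj, hμi, hs⟩ hrp
  | some ci =>
    have hci : ci ≠ cu := hop i j ci c hμi hj hcu hs hi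
    rw [hone i ci c hci hcu (hc i ci hμi) hi]

theorem isInitialSegment_fiber_unreserved (hcuE : ∀ i : N, I.Eligible i cu)
    (hcons : Consistent I order) (hrp : RespectsPriorities I μ) :
    IsInitialSegment (order.idxOf ·) (nonBeneficiaries cu μ) (fiber μ cu) := by
  refine ⟨fiber_subset_nonBeneficiaries, fun j hj i hi hlt => mem_fiber.2 ?_⟩
  simp only [nonBeneficiaries, mem_filter, mem_univ, true_and] at hi
  cases hμi : μ i with
  | none =>
    exact absurd ⟨j, i, cu, mem_fiber.1 hj, hμi, (hcons cu i j (hcuE i) (hcuE j)).2 hlt⟩ hrp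
  | some c => exact congrArg some (not_not.1 fun hc => hi c hc hμi)

theorem eq_of_catCount_eq (hb : IsBaseline order) (hcuE : ∀ i : N, I.Eligible i cu)
    (hcons : Consistent I order) (hone : OneCategory I cu)
    (hm₁ : I.IsMatching μ) (hc₁ : Complies I μ) (hr₁ : RespectsPriorities I μ)
    (hw₁ : NonWasteful I μ) (ho₁ : OrderPreservingMG I cu μ)
    (hm₂ : I.IsMatching ν) (hc₂ : Complies I ν) (hr₂ : RespectsPriorities I ν)
    (hw₂ : NonWasteful I ν) (ho₂ : OrderPreservingMG I cu ν)
    (hcount : ∀ c, c ≠ cu → catCount μ c = catCount ν c) : μ = ν := by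
  have hf := hb.idxOf_injective
  have hpref : ∀ c, c ≠ cu → fiber μ c = fiber ν c := fun c hc =>
    (isInitialSegment_fiber hcons hone hc₁ hr₁ ho₁ hc).eq_of_card_eq hf
      (isInitialSegment_fiber hcons hone hc₂ hr₂ ho₂ hc) (hcount c hc)
  have hnb : nonBeneficiaries cu μ = nonBeneficiaries cu ν := by
    ext i
    simp only [nonBeneficiaries, mem_filter, mem_univ, true_and]
    exact forall₂_congr fun c hc => by rw [ne_eq, ← mem_fiber, hpref c hc, mem_fiber]
  have hunres : fiber μ cu = fiber ν cu :=
    (isInitialSegment_fiber_unreserved hcuE hcons hr₁).eq_of_card_eq hf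
      (hnb ▸ isInitialSegment_fiber_unreserved hcuE hcons hr₂) (by
        rw [card_fiber, card_fiber, catCount_unreserved_eq_min hcuE hm₁ hw₁,
          catCount_unreserved_eq_min hcuE hm₂ hw₂, hnb])
  exact eq_of_fiber_eq fun c => if hc : c = cu then hc ▸ hunres else hpref c hc

end Uniqueness

/-- If each agent is eligible for at most one preferential category and all
categories' priorities are consistent with the baseline ordering, then the outcome of the
minimum-guarantees rule is the UNIQUE matching that complies with the eligibility
requirements, is a maximum beneficiary assignment, respects priorities, is non-wasteful,
and is order preserving for `q_{c_u^1} = 0` and `q_{c_u^2} = q_{c_u}`. -/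
theorem minimum_guarantees_unique (I : Inst N C) (cu : C) (order : List N)
    (hb : IsBaseline order) (hcuE : ∀ i : N, I.Eligible i cu)
    (hcons : Consistent I order) (hone : OneCategory I cu) :
    (I.IsMatching (mgOutcome I cu order) ∧
        Complies I (mgOutcome I cu order) ∧
        MaxBene I cu (mgOutcome I cu order) ∧
        RespectsPriorities I (mgOutcome I cu order) ∧
        NonWasteful I (mgOutcome I cu order) ∧
        OrderPreservingMG I cu (mgOutcome I cu order)) ∧
      ∀ μ : N → Option C, I.IsMatching μ → Complies I μ → MaxBene I cu μ →
        RespectsPriorities I μ → NonWasteful I μ → OrderPreservingMG I cu μ →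
        μ = mgOutcome I cu order := by
  have hle : ∀ ν, I.IsMatching ν → Complies I ν →
      ∀ c, c ≠ cu → catCount ν c ≤ catCount (mgOutcome I cu order) c :=
    fun ν hm hc c hcu => (catCount_mgOutcome hb hone hcu).symm ▸ catCount_le_min hm hc c
  have hm₀ := isMatching_mgOutcome (I := I) (cu := cu) hb.1
  have hc₀ := complies_mgOutcome hb hcuE
  have hr₀ := respectsPriorities_mgOutcome hb hcuE hcons
  have hw₀ := nonWasteful_mgOutcome (I := I) (cu := cu) hb
  have ho₀ := orderPreservingMG_mgOutcome hb hcons hone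
  refine ⟨⟨hm₀, hc₀, fun ν hm hc => beneCount_le_of_catCount_le (hle ν hm hc), hr₀, hw₀, ho₀⟩,
    ?_⟩
  intro μ hm hc hmax hr hw ho
  exact eq_of_catCount_eq hb hcuE hcons hone hm hc hr hw ho hm₀ hc₀ hr₀ hw₀ ho₀
    (catCount_eq_of_beneCount_le (hle μ hm hc) (hmax _ hm₀ hc₀))
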